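/- arXiv:2511.15219 — 2 statements merged into one kernel-verified Lean document; each statement's English description precedes it below -/
import Mathlib

section
/- Let V : {ρ>0}×ℝ² → ℝ be C¹, let η₁ (with parameter a₁) and η₂ (with parameter a₂) be admissible, and let ε₁, ε₂ : {ρ>0}×ℝ² → (0,∞) be continuous. Let (ρ,δ,γ) : [0,∞) → {ρ>0}×ℝ² be a solution of the polar unicycle whose controls are the inverse optimal feedback v(t) = −ρ ε₁ (η₁′)⁻¹(ε₁|ν₁|) sgn(ν₁) and ω(t) = −ε₂ (η₂′)⁻¹(ε₂|ν₂|) sgn(ν₂), where ε₁, ε₂, ν₁, ν₂ are evaluated along the trajectory, and suppose V(ρ(t),δ(t),γ(t)) → 0 as t → ∞. Then the cost J = ∫₀^∞ [ℓη₁(ε₁|ν₁|) + ℓη₂(ε₂|ν₂|) + η₁(|v|/(ε₁ρ)) + η₂(|ω|/ε₂)] dt satisfies J = V(ρ(0),δ(0),γ(0)); that is, this feedback minimizes the cost. -/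
/-!
Along the closed loop dV/dt = ν₁ (v/ρ) + ν₂ ω. For the inverse optimal feedback each product
−ν u equals s (η′)⁻¹(s) with s = ε|ν|, and by Young's equality ℓη(s) + η((η′)⁻¹(s)) = s (η′)⁻¹(s)
this is exactly the running cost of that input. Hence the integrand of J is −dV/dt ≥ 0, and J
telescopes to V(0) − lim V = V(0).

Young's equality is proved without differentiating (η′)⁻¹ =: g, which need not be smooth: the
gap φ(s) = s g(s) − ℓη(s) − η(g(s)) satisfies |φ(s₂) − φ(s₁)| ≤ (s₂ − s₁)(g(s₂) − g(s₁)), since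
both integrals in φ are squeezed between the corresponding rectangles. Summing over a uniform
partition of [0, s] gives |φ(s) − φ(0)| ≤ s g(s)/n for every n, so φ(s) = φ(0) = 0.
-/
noncomputable section

open Real Set Filter MeasureTheory

/-- The domain [0,a) for a ∈ (0,∞], encoded with a : EReal. -/
def domA (a : EReal) : Set ℝ := {r : ℝ | 0 ≤ r ∧ (r : EReal) < a}

/-- The filter of real numbers tending to a from the left (r → a⁻);
for a = ⊤ this is the filter at infinity. -/
def leftLimA (a : EReal) : Filter ℝ :=
  Filter.comap (fun r : ℝ => (r : EReal)) (nhdsWithin a (Set.Iio a))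

/-- η : [0,a) → [0,∞) is admissible with derivative η′ and inverse g = (η′)⁻¹. -/
structure IsAdmissible (a : EReal) (η η' g : ℝ → ℝ) : Prop where
  ha : 0 < a
  hasDeriv : ∀ r ∈ domA a, HasDerivWithinAt η (η' r) (domA a) r
  nonneg : ∀ r ∈ domA a, 0 ≤ η r
  zero : η 0 = 0
  mono : StrictMonoOn η (domA a)
  tendsto : Tendsto η (leftLimA a) atTop
  dcont : ContinuousOn η' (domA a)
  dmono : StrictMonoOn η' (domA a)
  dzero : η' 0 = 0
  dtendsto : Tendsto η' (leftLimA a) atTop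
  gmem : ∀ s : ℝ, 0 ≤ s → g s ∈ domA a
  gleft : ∀ r ∈ domA a, g (η' r) = r
  gright : ∀ s : ℝ, 0 ≤ s → η' (g s) = s

/-- Legendre–Fenchel transform ℓη(r) = ∫₀^r (η′)⁻¹(s) ds, with g = (η′)⁻¹. -/
def lfT (g : ℝ → ℝ) (r : ℝ) : ℝ := ∫ s in (0 : ℝ)..r, g s

/-- The continuous linear map (u,w,x) ↦ aρ·u + aδ·w + aγ·x, the total derivative
of a function of (ρ,δ,γ) with partial derivatives (aρ,aδ,aγ). -/
def gradMap (aρ aδ aγ : ℝ) : (ℝ × ℝ × ℝ) →L[ℝ] ℝ :=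
  aρ • ContinuousLinearMap.fst ℝ ℝ (ℝ × ℝ)
    + aδ • ((ContinuousLinearMap.fst ℝ ℝ ℝ).comp (ContinuousLinearMap.snd ℝ ℝ (ℝ × ℝ)))
    + aγ • ((ContinuousLinearMap.snd ℝ ℝ ℝ).comp (ContinuousLinearMap.snd ℝ ℝ (ℝ × ℝ)))

/-- ν₁ = −(∂V/∂ρ) ρ cos γ + (∂V/∂δ + ∂V/∂γ) sin γ, built from the partial
derivatives Vρ, Vδ, Vγ of V at the state p = (ρ,δ,γ). -/
def nuOne (Vρ Vδ Vγ : ℝ × ℝ × ℝ → ℝ) (p : ℝ × ℝ × ℝ) : ℝ :=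
  -(Vρ p) * p.1 * Real.cos p.2.2 + (Vδ p + Vγ p) * Real.sin p.2.2

/-- ν₂ = −∂V/∂γ. -/
def nuTwo (Vγ : ℝ × ℝ × ℝ → ℝ) (p : ℝ × ℝ × ℝ) : ℝ := -(Vγ p)

open Topology

theorem mul_sign_eq_abs (x : ℝ) : x * Real.sign x = |x| := by
  rcases lt_trichotomy x 0 with hx | rfl | hx
  · rw [Real.sign_of_neg hx, abs_of_neg hx, mul_neg_one]
  · simp
  · rw [Real.sign_of_pos hx, abs_of_pos hx, mul_one]

theorem MonotoneOn.mul_sub_le_intervalIntegral {f : ℝ → ℝ} {x y : ℝ} (hxy : x ≤ y)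
    (hf : MonotoneOn f (Icc x y)) : f x * (y - x) ≤ ∫ t in x..y, f t := by
  have hint : IntervalIntegrable f volume x y :=
    (hf.mono (uIcc_of_le hxy).le).intervalIntegrable
  calc f x * (y - x) = ∫ _ in x..y, f x := by simp [mul_comm]
    _ ≤ ∫ t in x..y, f t := intervalIntegral.integral_mono_on hxy intervalIntegrable_const hint
        fun t ht => hf (left_mem_Icc.2 hxy) ht ht.1

theorem MonotoneOn.intervalIntegral_le_mul_sub {f : ℝ → ℝ} {x y : ℝ} (hxy : x ≤ y)
    (hf : MonotoneOn f (Icc x y)) : ∫ t in x..y, f t ≤ f y * (y - x) := by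
  have hint : IntervalIntegrable f volume x y :=
    (hf.mono (uIcc_of_le hxy).le).intervalIntegrable
  calc ∫ t in x..y, f t ≤ ∫ _ in x..y, f y :=
        intervalIntegral.integral_mono_on hxy hint intervalIntegrable_const
          fun t ht => hf ht (right_mem_Icc.2 hxy) ht.2
    _ = f y * (y - x) := by simp [mul_comm]

theorem abs_sub_le_div_of_abs_sub_le_mul_sub {f h : ℝ → ℝ} {a b : ℝ} (hab : a ≤ b)
    (hf : ∀ x ∈ Icc a b, ∀ y ∈ Icc a b, x ≤ y → |f y - f x| ≤ (y - x) * (h y - h x))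
    {n : ℕ} (hn : n ≠ 0) : |f b - f a| ≤ (b - a) * (h b - h a) / n := by
  set d := (b - a) / n with hd
  set x : ℕ → ℝ := fun k => a + k * d with hx
  have hd0 : 0 ≤ d := div_nonneg (sub_nonneg.2 hab) n.cast_nonneg
  have hx0 : x 0 = a := by simp [hx]
  have hxn : x n = b := by
    simp only [hx, hd]; rw [mul_div_cancel₀ _ (Nat.cast_ne_zero.2 hn)]; ring
  have hstep : ∀ k, x (k + 1) - x k = d := fun k => by simp [hx]; ring
  have hmem : ∀ k ≤ n, x k ∈ Icc a b := fun k hk => by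
    refine ⟨le_add_of_nonneg_right (mul_nonneg k.cast_nonneg hd0), hxn ▸ ?_⟩
    simp only [hx]
    gcongr
  calc |f b - f a| = |∑ k ∈ Finset.range n, (f (x (k + 1)) - f (x k))| := by
        rw [Finset.sum_range_sub (fun k => f (x k)), hx0, hxn]
    _ ≤ ∑ k ∈ Finset.range n, |f (x (k + 1)) - f (x k)| := Finset.abs_sum_le_sum_abs _ _
    _ ≤ ∑ k ∈ Finset.range n, d * (h (x (k + 1)) - h (x k)) := by
        refine Finset.sum_le_sum fun k hk => ?_
        have hk := Finset.mem_range.1 hk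
        have := hf _ (hmem k hk.le) _ (hmem (k + 1) hk) (by linarith [hstep k])
        rwa [hstep k] at this
    _ = (b - a) * (h b - h a) / n := by
        rw [← Finset.mul_sum, Finset.sum_range_sub (fun k => h (x k)), hx0, hxn, hd]
        ring

theorem eq_of_abs_sub_le_mul_sub {f h : ℝ → ℝ} {a b : ℝ} (hab : a ≤ b)
    (hf : ∀ x ∈ Icc a b, ∀ y ∈ Icc a b, x ≤ y → |f y - f x| ≤ (y - x) * (h y - h x)) :
    f b = f a := by
  have hle : |f b - f a| ≤ 0 :=
    ge_of_tendsto (tendsto_const_div_atTop_nhds_zero_nat _)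
      ((eventually_ne_atTop 0).mono fun _ hn => abs_sub_le_div_of_abs_sub_le_mul_sub hab hf hn)
  exact sub_eq_zero.1 (abs_nonpos_iff.1 hle)

theorem lintegral_Ici_ofReal_eq_of_hasDerivAt {W f : ℝ → ℝ} {a L : ℝ}
    (hderiv : ∀ t ∈ Ici a, HasDerivAt W (-f t) t) (hf : ∀ t ∈ Ici a, 0 ≤ f t)
    (hW : Tendsto W atTop (𝓝 L)) :
    ∫⁻ t in Ici a, ENNReal.ofReal (f t) = ENNReal.ofReal (W a - L) := by
  have hderiv' : ∀ t ∈ Ici a, HasDerivAt (-W) (f t) t := fun t ht => by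
    simpa using (hderiv t ht).neg
  have hf' : ∀ t ∈ Ioi a, 0 ≤ f t := fun t ht => hf t (Ioi_subset_Ici_self ht)
  have hint := integrableOn_Ioi_deriv_of_nonneg' hderiv' hf' hW.neg
  rw [setLIntegral_congr Ioi_ae_eq_Ici.symm, ← ofReal_integral_eq_lintegral_ofReal hint
    ((ae_restrict_mem measurableSet_Ioi).mono hf'),
    integral_Ioi_of_hasDerivAt_of_nonneg' hderiv' hf' hW.neg]
  simp [sub_eq_add_neg, add_comm]

theorem Icc_subset_domA {a : EReal} {r₁ r₂ : ℝ} (h₁ : 0 ≤ r₁) (h₂ : r₂ ∈ domA a) :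
    Icc r₁ r₂ ⊆ domA a :=
  fun _ hx => ⟨h₁.trans hx.1, lt_of_le_of_lt (by exact_mod_cast hx.2) h₂.2⟩

def youngGap (η g : ℝ → ℝ) (s : ℝ) : ℝ := s * g s - lfT g s - η (g s)

namespace IsAdmissible

variable {a : EReal} {η η' g : ℝ → ℝ}

theorem zero_mem_domA (h : IsAdmissible a η η' g) : (0 : ℝ) ∈ domA a :=
  ⟨le_rfl, by exact_mod_cast h.ha⟩

theorem g_zero (h : IsAdmissible a η η' g) : g 0 = 0 := by
  simpa [h.dzero] using h.gleft 0 h.zero_mem_domA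

theorem g_nonneg (h : IsAdmissible a η η' g) {s : ℝ} (hs : 0 ≤ s) : 0 ≤ g s :=
  (h.gmem s hs).1

theorem monotoneOn_g (h : IsAdmissible a η η' g) : MonotoneOn g (Ici 0) := by
  intro s hs s' hs' hss'
  rwa [← h.dmono.le_iff_le (h.gmem s hs) (h.gmem s' hs'), h.gright s hs, h.gright s' hs']

theorem integral_deriv_eq_sub (h : IsAdmissible a η η' g) {r₁ r₂ : ℝ} (h₁ : 0 ≤ r₁)
    (h₁₂ : r₁ ≤ r₂) (h₂ : r₂ ∈ domA a) : ∫ x in r₁..r₂, η' x = η r₂ - η r₁ := by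
  have hsub := Icc_subset_domA h₁ h₂
  refine intervalIntegral.integral_eq_sub_of_hasDerivAt_of_le h₁₂
    (fun x hx => (h.hasDeriv x (hsub hx)).continuousWithinAt.mono hsub) (fun x hx => ?_)
    (h.dmono.monotoneOn.mono (by rwa [uIcc_of_le h₁₂])).intervalIntegrable
  exact ((h.hasDeriv x (hsub (Ioo_subset_Icc_self hx))).mono hsub).hasDerivAt
    (Icc_mem_nhds hx.1 hx.2)


theorem intervalIntegrable_g (h : IsAdmissible a η η' g) {s : ℝ} (hs : 0 ≤ s) :
    IntervalIntegrable g volume 0 s :=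
  (h.monotoneOn_g.mono fun _ hx => by rw [uIcc_of_le hs] at hx; exact hx.1).intervalIntegrable

theorem abs_youngGap_sub_le (h : IsAdmissible a η η' g) {s₁ s₂ : ℝ} (h₁ : 0 ≤ s₁)
    (h₁₂ : s₁ ≤ s₂) : |youngGap η g s₂ - youngGap η g s₁| ≤ (s₂ - s₁) * (g s₂ - g s₁) := by
  have h₂ : 0 ≤ s₂ := h₁.trans h₁₂
  have hr₁₂ : g s₁ ≤ g s₂ := h.monotoneOn_g h₁ h₂ h₁₂
  have hg : MonotoneOn g (Icc s₁ s₂) := h.monotoneOn_g.mono fun _ hx => h₁.trans hx.1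
  have hη' : MonotoneOn η' (Icc (g s₁) (g s₂)) :=
    h.dmono.monotoneOn.mono (Icc_subset_domA (h.g_nonneg h₁) (h.gmem s₂ h₂))
  have hlfT : lfT g s₂ - lfT g s₁ = ∫ u in s₁..s₂, g u :=
    intervalIntegral.integral_interval_sub_left (h.intervalIntegrable_g h₂)
      (h.intervalIntegrable_g h₁)
  have hη : η (g s₂) - η (g s₁) = ∫ r in g s₁..g s₂, η' r :=
    (h.integral_deriv_eq_sub (h.g_nonneg h₁) hr₁₂ (h.gmem s₂ h₂)).symm
  have hg_lower := hg.mul_sub_le_intervalIntegral h₁₂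
  have hg_upper := hg.intervalIntegral_le_mul_sub h₁₂
  have hη'_lower := hη'.mul_sub_le_intervalIntegral hr₁₂
  have hη'_upper := hη'.intervalIntegral_le_mul_sub hr₁₂
  rw [h.gright s₁ h₁] at hη'_lower
  rw [h.gright s₂ h₂] at hη'_upper
  rw [youngGap, youngGap, abs_le]
  constructor <;> nlinarith

theorem lfT_add_eq_mul (h : IsAdmissible a η η' g) {s : ℝ} (hs : 0 ≤ s) :
    lfT g s + η (g s) = s * g s := by
  have hconst : youngGap η g s = youngGap η g 0 :=
    eq_of_abs_sub_le_mul_sub hs fun _ hx _ _ hxy => h.abs_youngGap_sub_le hx.1 hxy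
  simp only [youngGap, lfT, h.g_zero, h.zero, intervalIntegral.integral_same] at hconst ⊢
  linarith

theorem cost_eq_neg_mul_of_feedback (h : IsAdmissible a η η' g) {c ν u : ℝ} (hc : 0 < c)
    (hu : u = -c * g (c * |ν|) * Real.sign ν) :
    lfT g (c * |ν|) + η (|u| / c) = -(ν * u) ∧ ν * u ≤ 0 := by
  have hs : 0 ≤ c * |ν| := by positivity
  have hνu : ν * u = -(c * |ν| * g (c * |ν|)) := by
    rw [hu]; linear_combination (-c * g (c * |ν|)) * mul_sign_eq_abs ν
  have hsign : g (c * |ν|) * |Real.sign ν| = g (c * |ν|) := by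
    rcases eq_or_ne ν 0 with rfl | hν
    · simp [h.g_zero]
    · rcases Real.sign_apply_eq_of_ne_zero ν hν with hν' | hν' <;> simp [hν']
  have habs : |u| / c = g (c * |ν|) := by
    rw [hu, abs_mul, abs_mul, abs_neg, abs_of_pos hc, abs_of_nonneg (h.g_nonneg hs), mul_assoc,
      hsign, mul_div_cancel_left₀ _ hc.ne']
  refine ⟨by rw [habs, h.lfT_add_eq_mul hs, hνu, neg_neg], ?_⟩
  rw [hνu, neg_nonpos]
  exact mul_nonneg hs (h.g_nonneg hs)

theorem cost_eq_neg_mul_div_of_feedback (h : IsAdmissible a η η' g) {c r ν v : ℝ} (hc : 0 < c)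
    (hr : 0 < r) (hv : v = -r * c * g (c * |ν|) * Real.sign ν) :
    lfT g (c * |ν|) + η (|v| / (c * r)) = -(ν * (v / r)) ∧ ν * (v / r) ≤ 0 := by
  rw [show |v| / (c * r) = |v / r| / c by rw [abs_div, abs_of_pos hr, div_div, mul_comm]]
  exact h.cost_eq_neg_mul_of_feedback hc (by rw [hv]; field_simp)

end IsAdmissible

theorem gradMap_apply (aρ aδ aγ : ℝ) (x : ℝ × ℝ × ℝ) :
    gradMap aρ aδ aγ x = aρ * x.1 + aδ * x.2.1 + aγ * x.2.2 := by
  simp [gradMap]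

theorem hasDerivAt_comp_unicycle {V Vρ Vδ Vγ : ℝ × ℝ × ℝ → ℝ} {ρ δ γ v ω : ℝ → ℝ} {t : ℝ}
    (hV : HasFDerivAt V (gradMap (Vρ (ρ t, δ t, γ t)) (Vδ (ρ t, δ t, γ t)) (Vγ (ρ t, δ t, γ t)))
      (ρ t, δ t, γ t))
    (hρ : HasDerivAt ρ (-(v t) * Real.cos (γ t)) t)
    (hδ : HasDerivAt δ ((v t / ρ t) * Real.sin (γ t)) t)
    (hγ : HasDerivAt γ ((v t / ρ t) * Real.sin (γ t) - ω t) t) (hρ₀ : ρ t ≠ 0) :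
    HasDerivAt (fun s => V (ρ s, δ s, γ s))
      (nuOne Vρ Vδ Vγ (ρ t, δ t, γ t) * (v t / ρ t) + nuTwo Vγ (ρ t, δ t, γ t) * ω t) t := by
  refine (hV.comp_hasDerivAt t (hρ.prodMk (hδ.prodMk hγ))).congr_deriv ?_
  rw [gradMap_apply]
  simp only [nuOne, nuTwo]
  field_simp
  ring

theorem inverse_optimal_feedback_minimizes_cost_general
    (V Vρ Vδ Vγ ε₁ ε₂ : ℝ × ℝ × ℝ → ℝ)
    (a₁ a₂ : EReal) (η₁ η₁' g₁ η₂ η₂' g₂ : ℝ → ℝ)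
    (hadm₁ : IsAdmissible a₁ η₁ η₁' g₁) (hadm₂ : IsAdmissible a₂ η₂ η₂' g₂)
    -- V is C¹ on {ρ > 0} × ℝ² with partial derivatives Vρ, Vδ, Vγ
    (hV : ∀ p : ℝ × ℝ × ℝ, 0 < p.1 → HasFDerivAt V (gradMap (Vρ p) (Vδ p) (Vγ p)) p)
    -- ε₁, ε₂ are continuous and positive on {ρ > 0} × ℝ²
    (hε₁pos : ∀ p : ℝ × ℝ × ℝ, 0 < p.1 → 0 < ε₁ p)
    (hε₂pos : ∀ p : ℝ × ℝ × ℝ, 0 < p.1 → 0 < ε₂ p)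
    -- the trajectory: a solution of the polar unicycle on [0,∞)
    (ρ δ γ v ω : ℝ → ℝ)
    (hρpos : ∀ t ∈ Set.Ici (0 : ℝ), 0 < ρ t)
    (hρ : ∀ t ∈ Set.Ici (0 : ℝ), HasDerivAt ρ (-(v t) * Real.cos (γ t)) t)
    (hδ : ∀ t ∈ Set.Ici (0 : ℝ), HasDerivAt δ ((v t / ρ t) * Real.sin (γ t)) t)
    (hγ : ∀ t ∈ Set.Ici (0 : ℝ),
      HasDerivAt γ ((v t / ρ t) * Real.sin (γ t) - ω t) t)
    -- the controls are the inverse optimal feedback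
    (hv : ∀ t ∈ Set.Ici (0 : ℝ),
      v t = -(ρ t) * ε₁ (ρ t, δ t, γ t)
        * g₁ (ε₁ (ρ t, δ t, γ t) * |nuOne Vρ Vδ Vγ (ρ t, δ t, γ t)|)
        * Real.sign (nuOne Vρ Vδ Vγ (ρ t, δ t, γ t)))
    (hω : ∀ t ∈ Set.Ici (0 : ℝ),
      ω t = -(ε₂ (ρ t, δ t, γ t))
        * g₂ (ε₂ (ρ t, δ t, γ t) * |nuTwo Vγ (ρ t, δ t, γ t)|)
        * Real.sign (nuTwo Vγ (ρ t, δ t, γ t)))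
    -- V converges to zero along the trajectory
    (hlim : Tendsto (fun t => V (ρ t, δ t, γ t)) atTop (nhds 0)) :
    (∫⁻ t in Set.Ici (0 : ℝ),
        ENNReal.ofReal
          (lfT g₁ (ε₁ (ρ t, δ t, γ t) * |nuOne Vρ Vδ Vγ (ρ t, δ t, γ t)|)
            + lfT g₂ (ε₂ (ρ t, δ t, γ t) * |nuTwo Vγ (ρ t, δ t, γ t)|)
            + η₁ (|v t| / (ε₁ (ρ t, δ t, γ t) * ρ t))
            + η₂ (|ω t| / ε₂ (ρ t, δ t, γ t))))
      = ENNReal.ofReal (V (ρ 0, δ 0, γ 0)) := by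
  have hcost₁ := fun t (ht : t ∈ Ici (0 : ℝ)) =>
    hadm₁.cost_eq_neg_mul_div_of_feedback (hε₁pos _ (hρpos t ht)) (hρpos t ht) (hv t ht)
  have hcost₂ := fun t (ht : t ∈ Ici (0 : ℝ)) =>
    hadm₂.cost_eq_neg_mul_of_feedback (hε₂pos _ (hρpos t ht)) (hω t ht)
  have hdV := fun t (ht : t ∈ Ici (0 : ℝ)) =>
    hasDerivAt_comp_unicycle (hV _ (hρpos t ht)) (hρ t ht) (hδ t ht) (hγ t ht) (hρpos t ht).ne'
  rw [← sub_zero (V (ρ 0, δ 0, γ 0))]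
  refine lintegral_Ici_ofReal_eq_of_hasDerivAt (W := fun t => V (ρ t, δ t, γ t))
    (fun t ht => (hdV t ht).congr_deriv ?_) (fun t ht => ?_) hlim
  · linear_combination (hcost₁ t ht).1 + (hcost₂ t ht).1
  · linarith [hcost₁ t ht, hcost₂ t ht]

theorem inverse_optimal_feedback_minimizes_cost
    (V Vρ Vδ Vγ ε₁ ε₂ : ℝ × ℝ × ℝ → ℝ)
    (a₁ a₂ : EReal) (η₁ η₁' g₁ η₂ η₂' g₂ : ℝ → ℝ)
    (hadm₁ : IsAdmissible a₁ η₁ η₁' g₁) (hadm₂ : IsAdmissible a₂ η₂ η₂' g₂)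
    -- V is C¹ on {ρ > 0} × ℝ² with partial derivatives Vρ, Vδ, Vγ
    (hV : ∀ p : ℝ × ℝ × ℝ, 0 < p.1 → HasFDerivAt V (gradMap (Vρ p) (Vδ p) (Vγ p)) p)
    (hVρc : ContinuousOn Vρ {p : ℝ × ℝ × ℝ | 0 < p.1})
    (hVδc : ContinuousOn Vδ {p : ℝ × ℝ × ℝ | 0 < p.1})
    (hVγc : ContinuousOn Vγ {p : ℝ × ℝ × ℝ | 0 < p.1})
    -- ε₁, ε₂ are continuous and positive on {ρ > 0} × ℝ²
    (hε₁c : ContinuousOn ε₁ {p : ℝ × ℝ × ℝ | 0 < p.1})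
    (hε₂c : ContinuousOn ε₂ {p : ℝ × ℝ × ℝ | 0 < p.1})
    (hε₁pos : ∀ p : ℝ × ℝ × ℝ, 0 < p.1 → 0 < ε₁ p)
    (hε₂pos : ∀ p : ℝ × ℝ × ℝ, 0 < p.1 → 0 < ε₂ p)
    -- the trajectory: a solution of the polar unicycle on [0,∞)
    (ρ δ γ v ω : ℝ → ℝ)
    (hρpos : ∀ t ∈ Set.Ici (0 : ℝ), 0 < ρ t)
    (hρ : ∀ t ∈ Set.Ici (0 : ℝ), HasDerivAt ρ (-(v t) * Real.cos (γ t)) t)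
    (hδ : ∀ t ∈ Set.Ici (0 : ℝ), HasDerivAt δ ((v t / ρ t) * Real.sin (γ t)) t)
    (hγ : ∀ t ∈ Set.Ici (0 : ℝ),
      HasDerivAt γ ((v t / ρ t) * Real.sin (γ t) - ω t) t)
    -- the controls are the inverse optimal feedback
    (hv : ∀ t ∈ Set.Ici (0 : ℝ),
      v t = -(ρ t) * ε₁ (ρ t, δ t, γ t)
        * g₁ (ε₁ (ρ t, δ t, γ t) * |nuOne Vρ Vδ Vγ (ρ t, δ t, γ t)|)
        * Real.sign (nuOne Vρ Vδ Vγ (ρ t, δ t, γ t)))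
    (hω : ∀ t ∈ Set.Ici (0 : ℝ),
      ω t = -(ε₂ (ρ t, δ t, γ t))
        * g₂ (ε₂ (ρ t, δ t, γ t) * |nuTwo Vγ (ρ t, δ t, γ t)|)
        * Real.sign (nuTwo Vγ (ρ t, δ t, γ t)))
    -- V converges to zero along the trajectory
    (hlim : Tendsto (fun t => V (ρ t, δ t, γ t)) atTop (nhds 0)) :
    (∫⁻ t in Set.Ici (0 : ℝ),
        ENNReal.ofReal
          (lfT g₁ (ε₁ (ρ t, δ t, γ t) * |nuOne Vρ Vδ Vγ (ρ t, δ t, γ t)|)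
            + lfT g₂ (ε₂ (ρ t, δ t, γ t) * |nuTwo Vγ (ρ t, δ t, γ t)|)
            + η₁ (|v t| / (ε₁ (ρ t, δ t, γ t) * ρ t))
            + η₂ (|ω t| / ε₂ (ρ t, δ t, γ t))))
      = ENNReal.ofReal (V (ρ 0, δ 0, γ 0)) :=
  inverse_optimal_feedback_minimizes_cost_general V Vρ Vδ Vγ ε₁ ε₂ a₁ a₂ η₁ η₁' g₁ η₂ η₂' g₂ hadm₁
    hadm₂ hV hε₁pos hε₂pos ρ δ γ v ω hρpos hρ hδ hγ hv hω hlim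

end
end

section
/- Consider the uncertain unicycle with unknown constants b₁, b₂ > 0 under the adaptive feedback and update laws, where V : {ρ>0}×ℝ² → [0,∞) is any nonnegative C¹ function. Along every closed-loop solution on [0,T) with ρ(t) > 0, for all t ∈ [0,T): ln(1 + n(V(t))) + c₁ (ε̃₁(t)² + ε̃₂(t)²) ≤ ln(1 + n(V(0))) + c₂ (ε̃₁(0)² + ε̃₂(0)²), where V(t) = V(ρ(t),δ(t),γ(t)), ε̃ᵢ(t) = 1/bᵢ − ε̂ᵢ(t), c₁ = min{b₁/(2μ₁), b₂/(2μ₂)}, and c₂ = max{b₁/(2μ₁), b₂/(2μ₂)}. (This is the uniform-boundedness estimate of the adaptive stabilization theorem.) -/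
/-!
The estimate is the monotonicity of the Lyapunov function
`W = ln (1 + n V) + Σᵢ bᵢ/(2μᵢ) (1/bᵢ - ε̂ᵢ)²`. Along the closed loop
`V̇ = -b₁ ε̂₁ ν₁² - b₂ ε̂₂ ν₂²`, and the update laws are chosen so that the unknown `bᵢ ε̂ᵢ`
cancel: `Ẇ = -(n'(V) / (1 + n V)) (ν₁² + ν₂²) ≤ 0`, since `n' ≥ 0` for increasing `n`.
Bounding the weights `bᵢ/(2μᵢ)` by their minimum at time `t` and their maximum at time `0`
turns `W t ≤ W 0` into the claim.
-/
noncomputable section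

open Real Set Filter

lemma gradMap_apply_s12 (a b c u w x : ℝ) : gradMap a b c (u, w, x) = a * u + b * w + c * x := by
  simp [gradMap]

def unicycleField (b₁ b₂ v ω : ℝ) (p : ℝ × ℝ × ℝ) : ℝ × ℝ × ℝ :=
  (-(b₁ * v) * Real.cos p.2.2, b₁ * (v / p.1) * Real.sin p.2.2,
    b₁ * (v / p.1) * Real.sin p.2.2 - b₂ * ω)

lemma gradMap_unicycleField (Vρ Vδ Vγ : ℝ × ℝ × ℝ → ℝ) (b₁ b₂ v ω : ℝ) {p : ℝ × ℝ × ℝ}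
    (hp : p.1 ≠ 0) :
    gradMap (Vρ p) (Vδ p) (Vγ p) (unicycleField b₁ b₂ v ω p)
      = b₁ * (v / p.1) * nuOne Vρ Vδ Vγ p + b₂ * ω * nuTwo Vγ p := by
  rw [unicycleField, gradMap_apply_s12, nuOne, nuTwo]
  field_simp
  ring

lemma hasDerivAt_comp_closedLoop {V Vρ Vδ Vγ : ℝ × ℝ × ℝ → ℝ} {ρ δ γ e₁ e₂ : ℝ → ℝ}
    {b₁ b₂ t : ℝ} (hV : HasFDerivAt V (gradMap (Vρ (ρ t, δ t, γ t)) (Vδ (ρ t, δ t, γ t))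
      (Vγ (ρ t, δ t, γ t))) (ρ t, δ t, γ t))
    (hρ₀ : ρ t ≠ 0)
    (hρ : HasDerivAt ρ
      (-(b₁ * (-(e₁ t) * ρ t * nuOne Vρ Vδ Vγ (ρ t, δ t, γ t))) * Real.cos (γ t)) t)
    (hδ : HasDerivAt δ
      (b₁ * ((-(e₁ t) * ρ t * nuOne Vρ Vδ Vγ (ρ t, δ t, γ t)) / ρ t) * Real.sin (γ t)) t)
    (hγ : HasDerivAt γ
      (b₁ * ((-(e₁ t) * ρ t * nuOne Vρ Vδ Vγ (ρ t, δ t, γ t)) / ρ t) * Real.sin (γ t)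
        - b₂ * (-(e₂ t) * nuTwo Vγ (ρ t, δ t, γ t))) t) :
    HasDerivAt (fun s => V (ρ s, δ s, γ s))
      (-(b₁ * e₁ t) * nuOne Vρ Vδ Vγ (ρ t, δ t, γ t) ^ 2
        - b₂ * e₂ t * nuTwo Vγ (ρ t, δ t, γ t) ^ 2) t := by
  have hp : HasDerivAt (fun s => (ρ s, δ s, γ s))
      (unicycleField b₁ b₂ (-(e₁ t) * ρ t * nuOne Vρ Vδ Vγ (ρ t, δ t, γ t))
        (-(e₂ t) * nuTwo Vγ (ρ t, δ t, γ t)) (ρ t, δ t, γ t)) t :=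
    hρ.prodMk (hδ.prodMk hγ)
  refine (hV.comp_hasDerivAt t hp).congr_deriv ?_
  rw [gradMap_unicycleField _ _ _ _ _ _ _ hρ₀]
  field_simp
  ring

/-- The Lyapunov function, with `x` standing for the value of `V`. -/
def adaptiveLyapunov (b₁ b₂ μ₁ μ₂ : ℝ) (n : ℝ → ℝ) (x e₁ e₂ : ℝ) : ℝ :=
  Real.log (1 + n x) + b₁ / (2 * μ₁) * (1 / b₁ - e₁) ^ 2 + b₂ / (2 * μ₂) * (1 / b₂ - e₂) ^ 2

lemma hasDerivAt_gainError_sq {e : ℝ → ℝ} {b μ q t : ℝ} (hb : b ≠ 0) (hμ : μ ≠ 0)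
    (he : HasDerivAt e (μ * q) t) :
    HasDerivAt (fun s => b / (2 * μ) * (1 / b - e s) ^ 2) (-(q * (1 - b * e t))) t := by
  refine (((he.const_sub (1 / b)).pow 2).const_mul (b / (2 * μ))).congr_deriv ?_
  norm_num
  field_simp

/-- The update laws make the unknown products `bᵢ ε̂ᵢ` in `V̇` cancel. -/
lemma hasDerivAt_adaptiveLyapunov {b₁ b₂ μ₁ μ₂ : ℝ} (hb₁ : b₁ ≠ 0) (hb₂ : b₂ ≠ 0)
    (hμ₁ : μ₁ ≠ 0) (hμ₂ : μ₂ ≠ 0) {n : ℝ → ℝ} {x e₁ e₂ : ℝ → ℝ} {t m ν₁ ν₂ : ℝ}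
    (hn : HasDerivAt n m (x t)) (hnx : 1 + n (x t) ≠ 0)
    (hx : HasDerivAt x (-(b₁ * e₁ t) * ν₁ ^ 2 - b₂ * e₂ t * ν₂ ^ 2) t)
    (he₁ : HasDerivAt e₁ (μ₁ * (m / (1 + n (x t))) * ν₁ ^ 2) t)
    (he₂ : HasDerivAt e₂ (μ₂ * (m / (1 + n (x t))) * ν₂ ^ 2) t) :
    HasDerivAt (fun s => adaptiveLyapunov b₁ b₂ μ₁ μ₂ n (x s) (e₁ s) (e₂ s))
      (-(m / (1 + n (x t)) * (ν₁ ^ 2 + ν₂ ^ 2))) t := by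
  rw [mul_assoc] at he₁ he₂
  have hlog := ((hn.comp t hx).const_add 1).log hnx
  simp only [Function.comp_apply] at hlog
  refine ((hlog.add (hasDerivAt_gainError_sq hb₁ hμ₁ he₁)).add
    (hasDerivAt_gainError_sq hb₂ hμ₂ he₂)).congr_deriv ?_
  field_simp
  ring

lemma HasDerivAt.nonneg_of_monotoneOn_Ici {g : ℝ → ℝ} {a x g' : ℝ} (hd : HasDerivAt g g' x)
    (hg : MonotoneOn g (Ici a)) (hx : a ≤ x) : 0 ≤ g' := by
  refine hd.hasDerivWithinAt.nonneg_of_monotoneOn ?_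
    (hg.mono fun _ hy => hx.trans (le_of_lt (mem_Ioi.mp hy)))
  rw [accPt_principal_iff_nhdsWithin, sdiff_singleton_eq_self self_notMem_Ioi]
  infer_instance

lemma antitoneOn_Ico_of_hasDerivAt_nonpos {f f' : ℝ → ℝ} {a b : ℝ}
    (hf : ∀ x ∈ Ico a b, HasDerivAt f (f' x) x) (hf' : ∀ x ∈ Ico a b, f' x ≤ 0) :
    AntitoneOn f (Ico a b) := by
  refine antitoneOn_of_hasDerivWithinAt_nonpos (f' := f') (convex_Ico a b)
    (fun x hx => (hf x hx).continuousAt.continuousWithinAt) (fun x hx => ?_) (fun x hx => ?_)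
  all_goals rw [interior_Ico] at hx
  · exact (hf x (Ioo_subset_Ico_self hx)).hasDerivWithinAt
  · exact hf' x (Ioo_subset_Ico_self hx)

lemma min_mul_add_le {a b x y : ℝ} (hx : 0 ≤ x) (hy : 0 ≤ y) :
    min a b * (x + y) ≤ a * x + b * y := by
  nlinarith [mul_le_mul_of_nonneg_right (min_le_left a b) hx,
    mul_le_mul_of_nonneg_right (min_le_right a b) hy]

lemma add_le_max_mul {a b x y : ℝ} (hx : 0 ≤ x) (hy : 0 ≤ y) :
    a * x + b * y ≤ max a b * (x + y) := by
  nlinarith [mul_le_mul_of_nonneg_right (le_max_left a b) hx,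
    mul_le_mul_of_nonneg_right (le_max_right a b) hy]

theorem adaptive_uniform_boundedness_general
    (b₁ b₂ μ₁ μ₂ : ℝ) (hb₁ : 0 < b₁) (hb₂ : 0 < b₂) (hμ₁ : 0 < μ₁) (hμ₂ : 0 < μ₂)
    (V Vρ Vδ Vγ : ℝ × ℝ × ℝ → ℝ) (n n' : ℝ → ℝ)
    -- V is a nonnegative C¹ function on {ρ > 0} × ℝ² with partials Vρ, Vδ, Vγ
    (hV : ∀ p : ℝ × ℝ × ℝ, 0 < p.1 → HasFDerivAt V (gradMap (Vρ p) (Vδ p) (Vγ p)) p)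
    (hVnonneg : ∀ p : ℝ × ℝ × ℝ, 0 < p.1 → 0 ≤ V p)
    -- n is a C¹, strictly increasing normalization function with n(0) = 0
    (hn : ∀ s : ℝ, 0 ≤ s → HasDerivAt n (n' s) s)
    (hnmono : StrictMonoOn n (Set.Ici 0))
    (hnnonneg : ∀ s : ℝ, 0 ≤ s → 0 ≤ n s)
    -- the closed-loop solution on [0,T) with feedback v = −ε̂₁ ρ ν₁, ω = −ε̂₂ ν₂
    (T : ℝ) (ρ δ γ e₁ e₂ : ℝ → ℝ)
    (hρpos : ∀ t ∈ Set.Ico (0 : ℝ) T, 0 < ρ t)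
    (hρ : ∀ t ∈ Set.Ico (0 : ℝ) T, HasDerivAt ρ
      (-(b₁ * (-(e₁ t) * ρ t * nuOne Vρ Vδ Vγ (ρ t, δ t, γ t)))
        * Real.cos (γ t)) t)
    (hδ : ∀ t ∈ Set.Ico (0 : ℝ) T, HasDerivAt δ
      (b₁ * ((-(e₁ t) * ρ t * nuOne Vρ Vδ Vγ (ρ t, δ t, γ t)) / ρ t)
        * Real.sin (γ t)) t)
    (hγ : ∀ t ∈ Set.Ico (0 : ℝ) T, HasDerivAt γ
      (b₁ * ((-(e₁ t) * ρ t * nuOne Vρ Vδ Vγ (ρ t, δ t, γ t)) / ρ t)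
          * Real.sin (γ t)
        - b₂ * (-(e₂ t) * nuTwo Vγ (ρ t, δ t, γ t))) t)
    -- the update laws
    (he₁ : ∀ t ∈ Set.Ico (0 : ℝ) T, HasDerivAt e₁
      (μ₁ * (n' (V (ρ t, δ t, γ t)) / (1 + n (V (ρ t, δ t, γ t))))
        * nuOne Vρ Vδ Vγ (ρ t, δ t, γ t) ^ 2) t)
    (he₂ : ∀ t ∈ Set.Ico (0 : ℝ) T, HasDerivAt e₂
      (μ₂ * (n' (V (ρ t, δ t, γ t)) / (1 + n (V (ρ t, δ t, γ t))))
        * nuTwo Vγ (ρ t, δ t, γ t) ^ 2) t) :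
    ∀ t ∈ Set.Ico (0 : ℝ) T,
      Real.log (1 + n (V (ρ t, δ t, γ t)))
          + min (b₁ / (2 * μ₁)) (b₂ / (2 * μ₂))
            * ((1 / b₁ - e₁ t) ^ 2 + (1 / b₂ - e₂ t) ^ 2)
        ≤ Real.log (1 + n (V (ρ 0, δ 0, γ 0)))
          + max (b₁ / (2 * μ₁)) (b₂ / (2 * μ₂))
            * ((1 / b₁ - e₁ 0) ^ 2 + (1 / b₂ - e₂ 0) ^ 2) := by
  intro t ht
  set W := fun s => adaptiveLyapunov b₁ b₂ μ₁ μ₂ n (V (ρ s, δ s, γ s)) (e₁ s) (e₂ s)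
  have hW : ∀ s ∈ Ico 0 T, HasDerivAt W
      (-(n' (V (ρ s, δ s, γ s)) / (1 + n (V (ρ s, δ s, γ s)))
        * (nuOne Vρ Vδ Vγ (ρ s, δ s, γ s) ^ 2 + nuTwo Vγ (ρ s, δ s, γ s) ^ 2))) s := by
    intro s hs
    have hVs := hVnonneg (ρ s, δ s, γ s) (hρpos s hs)
    have hVdot := hasDerivAt_comp_closedLoop (hV (ρ s, δ s, γ s) (hρpos s hs)) (hρpos s hs).ne'
      (hρ s hs) (hδ s hs) (hγ s hs)
    exact hasDerivAt_adaptiveLyapunov hb₁.ne' hb₂.ne' hμ₁.ne' hμ₂.ne' (hn _ hVs)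
      (by linarith [hnnonneg _ hVs]) hVdot (he₁ s hs) (he₂ s hs)
  have hWanti : AntitoneOn W (Ico 0 T) := by
    refine antitoneOn_Ico_of_hasDerivAt_nonpos hW fun s hs => ?_
    have hVs := hVnonneg (ρ s, δ s, γ s) (hρpos s hs)
    have hn'V := (hn _ hVs).nonneg_of_monotoneOn_Ici hnmono.monotoneOn hVs
    have hnV := hnnonneg _ hVs
    rw [neg_nonpos]
    positivity
  calc _ ≤ W t := by
        dsimp only [W, adaptiveLyapunov]
        linarith [min_mul_add_le (a := b₁ / (2 * μ₁)) (b := b₂ / (2 * μ₂))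
          (sq_nonneg (1 / b₁ - e₁ t)) (sq_nonneg (1 / b₂ - e₂ t))]
    _ ≤ W 0 := hWanti ⟨le_rfl, ht.1.trans_lt ht.2⟩ ht ht.1
    _ ≤ _ := by
        dsimp only [W, adaptiveLyapunov]
        linarith [add_le_max_mul (a := b₁ / (2 * μ₁)) (b := b₂ / (2 * μ₂))
          (sq_nonneg (1 / b₁ - e₁ 0)) (sq_nonneg (1 / b₂ - e₂ 0))]

theorem adaptive_uniform_boundedness
    (b₁ b₂ μ₁ μ₂ : ℝ) (hb₁ : 0 < b₁) (hb₂ : 0 < b₂) (hμ₁ : 0 < μ₁) (hμ₂ : 0 < μ₂)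
    (V Vρ Vδ Vγ : ℝ × ℝ × ℝ → ℝ) (n n' : ℝ → ℝ)
    -- V is a nonnegative C¹ function on {ρ > 0} × ℝ² with partials Vρ, Vδ, Vγ
    (hV : ∀ p : ℝ × ℝ × ℝ, 0 < p.1 → HasFDerivAt V (gradMap (Vρ p) (Vδ p) (Vγ p)) p)
    (hVnonneg : ∀ p : ℝ × ℝ × ℝ, 0 < p.1 → 0 ≤ V p)
    -- n is a C¹, strictly increasing normalization function with n(0) = 0
    (hn : ∀ s : ℝ, 0 ≤ s → HasDerivAt n (n' s) s)
    (hn0 : n 0 = 0) (hnmono : StrictMonoOn n (Set.Ici 0))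
    (hnnonneg : ∀ s : ℝ, 0 ≤ s → 0 ≤ n s)
    -- the closed-loop solution on [0,T) with feedback v = −ε̂₁ ρ ν₁, ω = −ε̂₂ ν₂
    (T : ℝ) (hT : 0 < T) (ρ δ γ e₁ e₂ : ℝ → ℝ)
    (hρpos : ∀ t ∈ Set.Ico (0 : ℝ) T, 0 < ρ t)
    (hρ : ∀ t ∈ Set.Ico (0 : ℝ) T, HasDerivAt ρ
      (-(b₁ * (-(e₁ t) * ρ t * nuOne Vρ Vδ Vγ (ρ t, δ t, γ t)))
        * Real.cos (γ t)) t)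
    (hδ : ∀ t ∈ Set.Ico (0 : ℝ) T, HasDerivAt δ
      (b₁ * ((-(e₁ t) * ρ t * nuOne Vρ Vδ Vγ (ρ t, δ t, γ t)) / ρ t)
        * Real.sin (γ t)) t)
    (hγ : ∀ t ∈ Set.Ico (0 : ℝ) T, HasDerivAt γ
      (b₁ * ((-(e₁ t) * ρ t * nuOne Vρ Vδ Vγ (ρ t, δ t, γ t)) / ρ t)
          * Real.sin (γ t)
        - b₂ * (-(e₂ t) * nuTwo Vγ (ρ t, δ t, γ t))) t)
    -- the update laws
    (he₁ : ∀ t ∈ Set.Ico (0 : ℝ) T, HasDerivAt e₁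
      (μ₁ * (n' (V (ρ t, δ t, γ t)) / (1 + n (V (ρ t, δ t, γ t))))
        * nuOne Vρ Vδ Vγ (ρ t, δ t, γ t) ^ 2) t)
    (he₂ : ∀ t ∈ Set.Ico (0 : ℝ) T, HasDerivAt e₂
      (μ₂ * (n' (V (ρ t, δ t, γ t)) / (1 + n (V (ρ t, δ t, γ t))))
        * nuTwo Vγ (ρ t, δ t, γ t) ^ 2) t) :
    ∀ t ∈ Set.Ico (0 : ℝ) T,
      Real.log (1 + n (V (ρ t, δ t, γ t)))
          + min (b₁ / (2 * μ₁)) (b₂ / (2 * μ₂))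
            * ((1 / b₁ - e₁ t) ^ 2 + (1 / b₂ - e₂ t) ^ 2)
        ≤ Real.log (1 + n (V (ρ 0, δ 0, γ 0)))
          + max (b₁ / (2 * μ₁)) (b₂ / (2 * μ₂))
            * ((1 / b₁ - e₁ 0) ^ 2 + (1 / b₂ - e₂ 0) ^ 2) :=
  adaptive_uniform_boundedness_general b₁ b₂ μ₁ μ₂ hb₁ hb₂ hμ₁ hμ₂ V Vρ Vδ Vγ n n' hV hVnonneg hn
    hnmono hnnonneg T ρ δ γ e₁ e₂ hρpos hρ hδ hγ he₁ he₂
end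
end
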